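/- arXiv:1205.7082 — 2 statements merged into one kernel-verified Lean document; each statement's English description precedes it below -/
import Mathlib

section
/- Let A be a self-adjoint operator on a Hilbert space H, let g₁,…,g_r ∈ H (playing the role of ∇C_j(X*)) be linearly independent, and suppose there exist vectors v₁,…,v_r ∈ dom(A) with A v_j = −g_j for each j. Set J_{jk} = −⟨v_j, A v_k⟩ (the Jacobian ∂c/∂ω), assumed invertible. Then H = G^⊥ ⊕ span{v₁,…,v_r} where G = span{g₁,…,g_r}, and for each α ∈ {−,0,+}, σ_α(A) = σ_α(A|_{G^⊥}) + σ_α(−J), where J is regarded as a symmetric r×r matrix. -/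
set_option synthInstance.maxHeartbeats 400000

open Module RealInnerProductSpace

noncomputable def sigNeg' {E : Type*} [NormedAddCommGroup E]
    [InnerProductSpace ℝ E] (Q : E →ₗ[ℝ] E) : ℕ∞ :=
  sSup {n : ℕ∞ | ∃ V : Submodule ℝ E, V ≠ ⊥ ∧ FiniteDimensional ℝ V ∧
    n = (Module.finrank ℝ V : ℕ∞) ∧ ∀ x ∈ V, x ≠ 0 → ⟪x, Q x⟫ < 0}

noncomputable def sigZero {E : Type*} [NormedAddCommGroup E]
    [InnerProductSpace ℝ E] (Q : E →ₗ[ℝ] E) : ℕ∞ :=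
  sSup {n : ℕ∞ | ∃ V : Submodule ℝ E, V ≠ ⊥ ∧ FiniteDimensional ℝ V ∧
    n = (Module.finrank ℝ V : ℕ∞) ∧ ∀ x ∈ V, Q x = 0}

noncomputable def sigPos' {E : Type*} [NormedAddCommGroup E]
    [InnerProductSpace ℝ E] (Q : E →ₗ[ℝ] E) : ℕ∞ :=
  sSup {n : ℕ∞ | ∃ V : Submodule ℝ E, V ≠ ⊥ ∧ FiniteDimensional ℝ V ∧
    n = (Module.finrank ℝ V : ℕ∞) ∧ ∀ x ∈ V, x ≠ 0 → 0 < ⟪x, Q x⟫}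

/-!
Write `G = span g`. Since `⟪vⱼ, gₖ⟫ = Jⱼₖ` and `J` is invertible, `(x, c) ↦ x + ∑ cⱼ vⱼ` is a
linear isomorphism `Gᗮ × ℝʳ ≃ H`; as `A` maps `span v` into `G`, it carries the quadratic form
`⟪x, A x⟫` to the orthogonal sum of the form of the compression of `A` to `Gᗮ` and the form of
`-J`. The positive index (the supremum of the dimensions of positive-definite subspaces) is
additive on orthogonal sums: if `q₁ + q₂` is positive definite on a finite-dimensional `W`, then
`dim W ≤ sigPos q₁ + sigPos q₂` by Sylvester's law of inertia in `W`. Applied to `±A` this gives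
`σ₊` and `σ₋`. For `σ₀`: `ker A ⊆ Gᗮ` is the kernel of the compression, and `-J` is injective.
-/

namespace QuadraticForm

variable {𝕜 E E₁ E₂ V : Type*} [Field 𝕜] [LinearOrder 𝕜] [AddCommGroup E] [Module 𝕜 E]
  [AddCommGroup E₁] [Module 𝕜 E₁] [AddCommGroup E₂] [Module 𝕜 E₂] [AddCommGroup V] [Module 𝕜 V]

/-- The infinite-dimensional version of `sigPos`. -/
noncomputable def posIndex (Q : QuadraticForm 𝕜 E) : ℕ∞ :=
  ⨆ (W : Submodule 𝕜 E) (_ : FiniteDimensional 𝕜 W ∧ (Q.restrict W).PosDef),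
    (finrank 𝕜 W : ℕ∞)

theorem le_posIndex {Q : QuadraticForm 𝕜 E} (W : Submodule 𝕜 E) [FiniteDimensional 𝕜 W]
    (hW : (Q.restrict W).PosDef) : (finrank 𝕜 W : ℕ∞) ≤ posIndex Q :=
  le_iSup₂_of_le W ⟨‹_›, hW⟩ le_rfl

theorem finrank_le_posIndex_of_posDef_comp [FiniteDimensional 𝕜 V] {Q : QuadraticForm 𝕜 E}
    (f : V →ₗ[𝕜] E) (h : (Q.comp f).PosDef) : (finrank 𝕜 V : ℕ∞) ≤ posIndex Q := by
  have hf : Function.Injective f := injective_iff_map_eq_zero f |>.mpr fun x hx => by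
    by_contra hx0
    simpa [hx] using h x hx0
  rw [← LinearMap.finrank_range_of_inj hf]
  refine le_posIndex _ fun ⟨y, x, hxy⟩ hy => ?_
  subst hxy
  exact h x (by rintro rfl; simp at hy)

theorem sigPos_comp_le_posIndex [FiniteDimensional 𝕜 V] (Q : QuadraticForm 𝕜 E)
    (f : V →ₗ[𝕜] E) : (sigPos (Q.comp f) : ℕ∞) ≤ posIndex Q := by
  obtain ⟨W, hW, hpos⟩ := exists_finrank_eq_sigPos_and_posDef (Q.comp f)
  rw [← hW]
  exact finrank_le_posIndex_of_posDef_comp (f ∘ₗ W.subtype) hpos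

theorem posIndex_comp_le (Q : QuadraticForm 𝕜 E) (f : E₁ →ₗ[𝕜] E) :
    posIndex (Q.comp f) ≤ posIndex Q :=
  iSup₂_le fun W ⟨_, hW⟩ => finrank_le_posIndex_of_posDef_comp (f ∘ₗ W.subtype) hW

theorem posIndex_comp_linearEquiv (Q : QuadraticForm 𝕜 E) (e : E₁ ≃ₗ[𝕜] E) :
    posIndex (Q.comp e.toLinearMap) = posIndex Q := by
  have hQ : (Q.comp e.toLinearMap).comp e.symm.toLinearMap = Q := by
    ext x
    simp
  refine le_antisymm (posIndex_comp_le Q e.toLinearMap) ?_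
  calc posIndex Q = posIndex ((Q.comp e.toLinearMap).comp e.symm.toLinearMap) := by rw [hQ]
    _ ≤ posIndex (Q.comp e.toLinearMap) := posIndex_comp_le _ _

theorem sSup_finrank_posDef_eq_posIndex (Q : QuadraticForm 𝕜 E) :
    sSup {n : ℕ∞ | ∃ W : Submodule 𝕜 E, W ≠ ⊥ ∧ FiniteDimensional 𝕜 W ∧
      n = (finrank 𝕜 W : ℕ∞) ∧ ∀ x ∈ W, x ≠ 0 → 0 < Q x} = posIndex Q := by
  refine le_antisymm (sSup_le ?_) (iSup₂_le fun W ⟨_, hW⟩ => ?_)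
  · rintro _ ⟨W, -, _, rfl, hW⟩
    exact le_posIndex W fun x hx => hW x x.2 (by simpa using hx)
  · rcases eq_or_ne W ⊥ with rfl | hbot
    · simp
    · exact le_sSup ⟨W, hbot, ‹_›, rfl, fun x hx hx0 => hW ⟨x, hx⟩ (by simpa using hx0)⟩

variable [IsStrictOrderedRing 𝕜]

theorem exists_nonpos_finrank_add_sigPos [FiniteDimensional 𝕜 V] (q : QuadraticForm 𝕜 V) :
    ∃ W : Submodule 𝕜 V, (∀ x ∈ W, q x ≤ 0) ∧ finrank 𝕜 W + sigPos q = finrank 𝕜 V := by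
  obtain ⟨N, hN, hNneg⟩ := exists_finrank_eq_sigNeg_and_negDef q
  have hdisj : N ⊓ q.radical = ⊥ := by
    refine eq_bot_iff.mpr fun x ⟨hxN, hxR⟩ => (Submodule.mem_bot 𝕜).mpr ?_
    by_contra hx
    have := hNneg ⟨x, hxN⟩ (by simpa using hx)
    simp [(QuadraticMap.mem_radical_iff'.mp hxR).1] at this
  refine ⟨N ⊔ q.radical, fun x hx => ?_, ?_⟩
  · obtain ⟨n, hn, z, hz, rfl⟩ := Submodule.mem_sup.mp hx
    rw [add_comm, (QuadraticMap.mem_radical_iff'.mp hz).2]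
    simpa using hNneg.nonneg ⟨n, hn⟩
  · have hsup := Submodule.finrank_sup_add_finrank_inf_eq N q.radical
    rw [hdisj, finrank_bot, add_zero] at hsup
    have := sigPos_add_sigNeg_add_radical (Q := q)
    omega

theorem finrank_le_sigPos_add_sigPos [FiniteDimensional 𝕜 V] {q r : QuadraticForm 𝕜 V}
    (h : (q + r).PosDef) : finrank 𝕜 V ≤ sigPos q + sigPos r := by
  obtain ⟨W, hWq, hW⟩ := exists_nonpos_finrank_add_sigPos q
  have hWr : (r.restrict W).PosDef := fun x hx => by
    have hqr := h x (by simpa using hx)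
    have hq := hWq x x.2
    simp only [add_apply] at hqr
    simp only [QuadraticMap.restrict_apply]
    linarith
  have := le_sigPos_of_posDef r hWr
  omega

theorem posIndex_prod (Q₁ : QuadraticForm 𝕜 E₁) (Q₂ : QuadraticForm 𝕜 E₂) :
    posIndex (Q₁.prod Q₂) = posIndex Q₁ + posIndex Q₂ := by
  refine le_antisymm (iSup₂_le fun W ⟨_, hW⟩ => ?_) ?_
  · -- the restriction of `Q₁.prod Q₂` to `W` is, by definition, the sum of these two pullbacks
    calc (finrank 𝕜 W : ℕ∞)
        ≤ sigPos (Q₁.comp (LinearMap.fst 𝕜 E₁ E₂ ∘ₗ W.subtype))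
          + sigPos (Q₂.comp (LinearMap.snd 𝕜 E₁ E₂ ∘ₗ W.subtype)) := by
          exact_mod_cast finrank_le_sigPos_add_sigPos hW
      _ ≤ posIndex Q₁ + posIndex Q₂ :=
          add_le_add (sigPos_comp_le_posIndex _ _) (sigPos_comp_le_posIndex _ _)
  · refine ENat.biSup_add_biSup_le'
      ⟨⊥, inferInstance, fun x hx => absurd (Subsingleton.elim x 0) hx⟩
      ⟨⊥, inferInstance, fun x hx => absurd (Subsingleton.elim x 0) hx⟩
      fun W₁ ⟨_, hW₁⟩ W₂ ⟨_, hW₂⟩ => ?_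
    rw [← Nat.cast_add, ← Module.finrank_prod]
    exact finrank_le_posIndex_of_posDef_comp (W₁.subtype.prodMap W₂.subtype)
      (QuadraticMap.posDef_prod_iff.mpr ⟨hW₁, hW₂⟩)

theorem posIndex_eq_add_of_linearEquiv {Q : QuadraticForm 𝕜 E} {Q₁ : QuadraticForm 𝕜 E₁}
    {Q₂ : QuadraticForm 𝕜 E₂} (e : (E₁ × E₂) ≃ₗ[𝕜] E)
    (h : ∀ x y, Q (e (x, y)) = Q₁ x + Q₂ y) : posIndex Q = posIndex Q₁ + posIndex Q₂ := by
  rw [← posIndex_comp_linearEquiv Q e, ← posIndex_prod]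
  congr 1
  ext ⟨x, y⟩
  exact h x y

end QuadraticForm

namespace LinearMap

variable {E : Type*} [NormedAddCommGroup E] [InnerProductSpace ℝ E]

noncomputable def quadForm (T : E →ₗ[ℝ] E) : QuadraticForm ℝ E :=
  BilinMap.toQuadraticMap ((innerₗ E).compl₂ T)

@[simp]
theorem quadForm_apply (T : E →ₗ[ℝ] E) (x : E) : T.quadForm x = ⟪x, T x⟫ := rfl

theorem quadForm_add_of_inner_eq_zero {T : E →ₗ[ℝ] E} (hT : T.IsSymmetric) {x y : E}
    (h : ⟪x, T y⟫ = 0) : T.quadForm (x + y) = T.quadForm x + T.quadForm y := by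
  have h' : ⟪y, T x⟫ = 0 := by rw [← hT, real_inner_comm, h]
  simp only [quadForm_apply, map_add, inner_add_left, inner_add_right, h, h']
  ring

theorem quadForm_compression {K : Submodule ℝ E} [K.HasOrthogonalProjection] {T : E →ₗ[ℝ] E}
    {S : K →ₗ[ℝ] K} (hS : ∀ x, S x = K.orthogonalProjectionOnto (T x)) (x : K) :
    S.quadForm x = T.quadForm x := by
  simp [hS]

end LinearMap

section Signature

open LinearMap

variable {E F : Type*} [NormedAddCommGroup E] [InnerProductSpace ℝ E]
  [NormedAddCommGroup F] [InnerProductSpace ℝ F]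

theorem sigPos'_eq_posIndex_quadForm (T : E →ₗ[ℝ] E) :
    sigPos' T = QuadraticForm.posIndex T.quadForm :=
  QuadraticForm.sSup_finrank_posDef_eq_posIndex T.quadForm

theorem sigNeg'_eq_posIndex_neg_quadForm (T : E →ₗ[ℝ] E) :
    sigNeg' T = QuadraticForm.posIndex (-T.quadForm) := by
  simp_rw [sigNeg', ← neg_pos]
  exact QuadraticForm.sSup_finrank_posDef_eq_posIndex (-T.quadForm)

theorem sigZero_eq_of_map_ker_eq {T : E →ₗ[ℝ] E} {S : F →ₗ[ℝ] F} (f : E →ₗ[ℝ] F)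
    (hf : Function.Injective f) (h : (ker T).map f = ker S) : sigZero S = sigZero T := by
  unfold sigZero
  congr 1
  ext n
  constructor
  · rintro ⟨W, hW, _, rfl, hWS⟩
    have hWf : W ≤ range f := fun y hy => by
      obtain ⟨x, -, rfl⟩ := h.ge (mem_ker.mpr (hWS y hy))
      exact mem_range_self f x
    have e : W.comap f ≃ₗ[ℝ] W :=
      (Submodule.equivMapOfInjective f hf _).trans
        (LinearEquiv.ofEq _ _ (Submodule.map_comap_eq_of_le hWf))
    refine ⟨W.comap f, fun hbot => hW ?_, e.symm.finiteDimensional, by rw [e.finrank_eq], ?_⟩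
    · rw [← Submodule.map_comap_eq_of_le hWf, hbot, Submodule.map_bot]
    · intro x hx
      obtain ⟨x', hx', hfx⟩ := h.ge (mem_ker.mpr (hWS _ hx))
      rw [← hf hfx]
      exact hx'
  · rintro ⟨W, hW, _, rfl, hWT⟩
    have e := Submodule.equivMapOfInjective f hf W
    refine ⟨W.map f, by
      rwa [← Submodule.map_bot f, (Submodule.map_injective_of_injective hf).ne_iff],
      e.finiteDimensional, by rw [e.finrank_eq], ?_⟩
    rintro _ ⟨x, hx, rfl⟩
    exact h.le ⟨x, mem_ker.mpr (hWT x hx), rfl⟩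

theorem sigZero_eq_zero_of_injective {T : E →ₗ[ℝ] E} (hT : Function.Injective T) :
    sigZero T = 0 := by
  refine sSup_eq_bot.mpr ?_
  rintro _ ⟨W, hW, -, -, hWT⟩
  exact absurd (eq_bot_iff.mpr fun x hx => (Submodule.mem_bot ℝ).mpr
    (hT (by rw [hWT x hx, map_zero]))) hW

end Signature

section CrossGram

open Submodule
open scoped Matrix

variable {E ι : Type*} [NormedAddCommGroup E] [InnerProductSpace ℝ E]

theorem Submodule.mem_orthogonal_span_range_iff {g : ι → E} {x : E} :
    x ∈ (span ℝ (Set.range g))ᗮ ↔ ∀ i, ⟪g i, x⟫ = 0 := by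
  simp [span_range_eq_iSup, ← iInf_orthogonal, mem_orthogonal_singleton_iff_inner_right]

def Matrix.crossGram {κ : Type*} (v : ι → E) (w : κ → E) : Matrix ι κ ℝ :=
  Matrix.of fun i j => ⟪v i, w j⟫

@[simp]
theorem Matrix.crossGram_apply {κ : Type*} (v : ι → E) (w : κ → E) (i : ι) (j : κ) :
    Matrix.crossGram v w i j = ⟪v i, w j⟫ := rfl

variable [Fintype ι] {g v : ι → E}

theorem LinearMap.quadForm_linearCombination (T : E →ₗ[ℝ] E) (c : ι → ℝ) :
    T.quadForm (Fintype.linearCombination ℝ v c) =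
      c ⬝ᵥ Matrix.crossGram v (T ∘ v) *ᵥ c := by
  simp only [quadForm_apply, Fintype.linearCombination_apply, map_sum, map_smul, inner_sum,
    sum_inner, real_inner_smul_left, real_inner_smul_right, dotProduct, Matrix.mulVec,
    Matrix.crossGram_apply, Function.comp_apply, Finset.mul_sum]
  rw [Finset.sum_comm]
  exact Finset.sum_congr rfl fun i _ => Finset.sum_congr rfl fun j _ => by ring

theorem Matrix.quadForm_toEuclideanLin [DecidableEq ι] (M : Matrix ι ι ℝ)
    (c : EuclideanSpace ℝ ι) : (toEuclideanLin M).quadForm c = c.ofLp ⬝ᵥ M *ᵥ c.ofLp := by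
  simp [EuclideanSpace.inner_eq_star_dotProduct, dotProduct_comm]

theorem Matrix.injective_toEuclideanLin_of_isUnit {𝕜 : Type*} [RCLike 𝕜] [DecidableEq ι]
    {M : Matrix ι ι 𝕜} (hM : IsUnit M) : Function.Injective (toEuclideanLin M) := fun c c' h =>
  WithLp.ofLp_injective 2 <| mulVec_injective_iff_isUnit.mpr hM <| by
    simpa using congrArg WithLp.ofLp h

theorem inner_linearCombination_eq_vecMul_crossGram (c : ι → ℝ) (j : ι) :
    ⟪g j, Fintype.linearCombination ℝ v c⟫ = (c ᵥ* Matrix.crossGram v g) j := by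
  simp [Fintype.linearCombination_apply, inner_sum, real_inner_smul_right, Matrix.vecMul,
    dotProduct, real_inner_comm]

variable [DecidableEq ι]

theorem eq_zero_of_linearCombination_mem_orthogonal (hU : IsUnit (Matrix.crossGram v g))
    {c : ι → ℝ} (hc : Fintype.linearCombination ℝ v c ∈ (span ℝ (Set.range g))ᗮ) : c = 0 := by
  refine Matrix.vecMul_injective_iff_isUnit.mpr hU ?_
  ext j
  simpa [← inner_linearCombination_eq_vecMul_crossGram] using
    mem_orthogonal_span_range_iff.mp hc j

theorem linearIndependent_of_isUnit_crossGram (hU : IsUnit (Matrix.crossGram v g)) :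
    LinearIndependent ℝ v :=
  Fintype.linearIndependent_iff.mpr fun c hc => by
    rw [eq_zero_of_linearCombination_mem_orthogonal hU (c := c)
      (by rw [Fintype.linearCombination_apply, hc]; exact zero_mem _)]
    exact fun _ => rfl

theorem isCompl_orthogonal_span_range_of_isUnit_crossGram (hU : IsUnit (Matrix.crossGram v g)) :
    IsCompl (span ℝ (Set.range g))ᗮ (span ℝ (Set.range v)) := by
  rw [← Fintype.range_linearCombination (R := ℝ) (v := v)]
  refine ⟨disjoint_def.mpr ?_, codisjoint_iff_le_sup.mpr fun x _ => ?_⟩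
  · rintro _ hc ⟨c, rfl⟩
    rw [eq_zero_of_linearCombination_mem_orthogonal hU hc, map_zero]
  · obtain ⟨c, hc⟩ := Matrix.vecMul_surjective_iff_isUnit.mpr hU fun j => ⟪g j, x⟫
    refine mem_sup.mpr ⟨x - Fintype.linearCombination ℝ v c, ?_, _,
      LinearMap.mem_range_self _ c, sub_add_cancel _ _⟩
    refine mem_orthogonal_span_range_iff.mpr fun j => ?_
    rw [inner_sub_right, inner_linearCombination_eq_vecMul_crossGram,
      show c ᵥ* Matrix.crossGram v g = _ from hc, sub_self]

end CrossGram

section ConstrainedOperator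

open Submodule

variable {H ι : Type*} [NormedAddCommGroup H] [InnerProductSpace ℝ H]
  {A : H →ₗ[ℝ] H} {g v : ι → H}

theorem inner_apply_eq_zero_of_mem_orthogonal (hAv : ∀ j, A (v j) = -g j) {x y : H}
    (hx : x ∈ (span ℝ (Set.range g))ᗮ) (hy : y ∈ span ℝ (Set.range v)) :
    ⟪x, A y⟫ = 0 := by
  have hAy : A y ∈ span ℝ (Set.range g) := by
    refine span_le.mpr ?_ (map_span A (Set.range v) ▸ mem_map_of_mem hy)
    rintro _ ⟨_, ⟨j, rfl⟩, rfl⟩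
    rw [hAv]
    exact neg_mem (subset_span ⟨j, rfl⟩)
  exact inner_left_of_mem_orthogonal hAy hx

theorem mem_orthogonal_of_apply_eq_zero (hA : A.IsSymmetric) (hAv : ∀ j, A (v j) = -g j)
    {y : H} (hy : A y = 0) : y ∈ (span ℝ (Set.range g))ᗮ :=
  mem_orthogonal_span_range_iff.mpr fun j => by
    rw [← neg_neg (g j), ← hAv, inner_neg_left, hA, hy, inner_zero_right, neg_zero]

variable [(span ℝ (Set.range g))ᗮ.HasOrthogonalProjection]
  {Ares : (span ℝ (Set.range g))ᗮ →ₗ[ℝ] (span ℝ (Set.range g))ᗮ}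

theorem map_ker_compression_eq_ker (hA : A.IsSymmetric) (hAv : ∀ j, A (v j) = -g j)
    (hcompl : IsCompl (span ℝ (Set.range g))ᗮ (span ℝ (Set.range v)))
    (hAres : ∀ x, Ares x = (span ℝ (Set.range g))ᗮ.orthogonalProjectionOnto (A x)) :
    (LinearMap.ker Ares).map (span ℝ (Set.range g))ᗮ.subtype = LinearMap.ker A := by
  ext y
  constructor
  · rintro ⟨x, hx, rfl⟩
    -- `A x` is orthogonal to both summands of `H = Gᗮ ⊕ span v`
    refine ext_inner_left ℝ fun w => ?_
    rw [Submodule.subtype_apply, inner_zero_right]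
    obtain ⟨a, ha, b, hb, rfl⟩ := mem_sup.mp (hcompl.sup_eq_top ▸ mem_top : w ∈ _ ⊔ _)
    have hxa : ⟪a, A x⟫ = 0 := by
      simpa [hAres] using
        congrArg (⟪(⟨a, ha⟩ : (span ℝ (Set.range g))ᗮ), ·⟫) (LinearMap.mem_ker.mp hx)
    rw [inner_add_left, hxa, ← hA, real_inner_comm,
      inner_apply_eq_zero_of_mem_orthogonal hAv x.2 hb, add_zero]
  · intro hy
    exact ⟨⟨y, mem_orthogonal_of_apply_eq_zero hA hAv hy⟩,
      by simp [hAres, LinearMap.mem_ker.mp hy], rfl⟩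

theorem exists_linearEquiv_quadForm_eq_add [Fintype ι] [DecidableEq ι] (hA : A.IsSymmetric)
    (hAv : ∀ j, A (v j) = -g j) (hU : IsUnit (Matrix.crossGram v g))
    (hAres : ∀ x, Ares x = (span ℝ (Set.range g))ᗮ.orthogonalProjectionOnto (A x)) :
    ∃ e : ((span ℝ (Set.range g))ᗮ × EuclideanSpace ℝ ι) ≃ₗ[ℝ] H, ∀ x c,
      A.quadForm (e (x, c)) =
        Ares.quadForm x + (Matrix.toEuclideanLin (-Matrix.crossGram v g)).quadForm c := by
  let L := Fintype.linearCombination ℝ v ∘ₗ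
    (WithLp.linearEquiv 2 ℝ (ι → ℝ)).toLinearMap
  have hL : Function.Injective L :=
    (linearIndependent_of_isUnit_crossGram hU).fintypeLinearCombination_injective.comp
      (WithLp.linearEquiv 2 ℝ (ι → ℝ)).injective
  have hrange : LinearMap.range L = span ℝ (Set.range v) := by
    simp [L, LinearMap.range_comp]
  refine ⟨((LinearEquiv.refl ℝ _).prodCongr (LinearEquiv.ofInjective L hL)).trans
    (prodEquivOfIsCompl _ _ (hrange ▸ isCompl_orthogonal_span_range_of_isUnit_crossGram hU)),
    fun x c => ?_⟩
  change A.quadForm (x + Fintype.linearCombination ℝ v c.ofLp) = _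
  rw [LinearMap.quadForm_add_of_inner_eq_zero hA (inner_apply_eq_zero_of_mem_orthogonal hAv x.2
      (hrange ▸ LinearMap.mem_range_self L c)), LinearMap.quadForm_compression hAres,
    Matrix.quadForm_toEuclideanLin, LinearMap.quadForm_linearCombination]
  congr 3
  ext i j
  simp [hAv, inner_neg_right]

end ConstrainedOperator

theorem signature_identity_general
    {H : Type*} [NormedAddCommGroup H] [InnerProductSpace ℝ H] [CompleteSpace H]
    {r : ℕ} (A : H →ₗ[ℝ] H) (hA : LinearMap.IsSymmetric A)
    (g v : Fin r → H)
    (hAv : ∀ j, A (v j) = -(g j))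
    (J : Matrix (Fin r) (Fin r) ℝ) (hJ : ∀ j k, J j k = -⟪v j, A (v k)⟫)
    (hJinv : IsUnit J.det)
    (G : Submodule ℝ H) (hG : G = Submodule.span ℝ (Set.range g))
    (Ares : ↥Gᗮ →ₗ[ℝ] ↥Gᗮ)
    (hAres : ∀ x : ↥Gᗮ, Ares x = Submodule.orthogonalProjectionOnto Gᗮ (A x)) :
    IsCompl Gᗮ (Submodule.span ℝ (Set.range v)) ∧
    sigNeg' A = sigNeg' Ares + sigNeg' (Matrix.toEuclideanLin (-J)) ∧
    sigZero A = sigZero Ares + sigZero (Matrix.toEuclideanLin (-J)) ∧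
    sigPos' A = sigPos' Ares + sigPos' (Matrix.toEuclideanLin (-J)) := by
  subst hG
  have hJg : J = Matrix.crossGram v g := by
    ext j k
    rw [hJ, hAv, inner_neg_right, neg_neg, Matrix.crossGram_apply]
  have hJunit : IsUnit J := (Matrix.isUnit_iff_isUnit_det J).mpr hJinv
  have hU : IsUnit (Matrix.crossGram v g) := hJg ▸ hJunit
  have hcompl := isCompl_orthogonal_span_range_of_isUnit_crossGram hU
  obtain ⟨e, he⟩ := exists_linearEquiv_quadForm_eq_add hA hAv hU hAres
  rw [← hJg] at he
  refine ⟨hcompl, ?_, ?_, ?_⟩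
  · simp only [sigNeg'_eq_posIndex_neg_quadForm]
    exact QuadraticForm.posIndex_eq_add_of_linearEquiv e fun x c => by simp [he]; ring
  · rw [sigZero_eq_zero_of_injective (T := Matrix.toEuclideanLin (-J))
      (Matrix.injective_toEuclideanLin_of_isUnit hJunit.neg), add_zero]
    exact sigZero_eq_of_map_ker_eq _ (Submodule.injective_subtype _)
      (map_ker_compression_eq_ker hA hAv hcompl hAres)
  · simp only [sigPos'_eq_posIndex_quadForm]
    exact QuadraticForm.posIndex_eq_add_of_linearEquiv e he

/-- The key signature identity: for a self-adjoint `A` with `A vⱼ = -gⱼ`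
(`gⱼ` the constraint gradients) and invertible Jacobian `J = (-⟨vⱼ, A vₖ⟩)`,
the space splits as `H = Gᗮ ⊕ span{vⱼ}` and
`σ_α(A) = σ_α(A|_{Gᗮ}) + σ_α(-J)` for each `α ∈ {-,0,+}`. -/
theorem signature_identity
    {H : Type*} [NormedAddCommGroup H] [InnerProductSpace ℝ H] [CompleteSpace H]
    {r : ℕ} (A : H →ₗ[ℝ] H) (hA : LinearMap.IsSymmetric A)
    (g v : Fin r → H) (hg : LinearIndependent ℝ g)
    (hAv : ∀ j, A (v j) = -(g j))
    (J : Matrix (Fin r) (Fin r) ℝ) (hJ : ∀ j k, J j k = -⟪v j, A (v k)⟫)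
    (hJinv : IsUnit J.det)
    (G : Submodule ℝ H) (hG : G = Submodule.span ℝ (Set.range g))
    (Ares : ↥Gᗮ →ₗ[ℝ] ↥Gᗮ)
    (hAres : ∀ x : ↥Gᗮ, Ares x = Submodule.orthogonalProjectionOnto Gᗮ (A x)) :
    IsCompl Gᗮ (Submodule.span ℝ (Set.range v)) ∧
    sigNeg' A = sigNeg' Ares + sigNeg' (Matrix.toEuclideanLin (-J)) ∧
    sigZero A = sigZero Ares + sigZero (Matrix.toEuclideanLin (-J)) ∧
    sigPos' A = sigPos' Ares + sigPos' (Matrix.toEuclideanLin (-J)) :=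
  signature_identity_general A hA g v hAv J hJ hJinv G hG Ares hAres
end

section
/- Let a, b : ℝ → ℝ be continuous with a(u) ≥ a₀ > 0 and b(u) ≥ b₀ > 0, let δ > 0, let u*, v* be continuous 1-periodic functions, and define on L²[0,1] × H²_per[0,1] the operator A = [[a(u*)/b(u*), −1],[−1, Ã]] where Ã = −(1/δ)(d²/dx² + g'(v*)). Then with S = [[a(u*)/b(u*), 0],[−1, 1]] and T = diag(b(u*)/a(u*), Ã − b(u*)/a(u*)), one has A = S* T S, and consequently σ_α(A) = σ_α(T) for each α ∈ {−,0,+}; in particular, if the operator Ã − b(u*)/a(u*) has exactly one simple negative eigenvalue, then σ_−(A) = 1. -/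
/-! Sylvester's law of inertia for the congruence `A = S† T S`: a bijective `S` maps the
finite-dimensional subspaces on which the form of `A` is negative, positive or null onto those of
`T` (the null case because `S†` is injective once `S` is onto). For `T = diag(m', Ã - m')` with
`m' > 0`, the form of `T` is nonnegative on the kernel of `z ↦ ⟪ψ, z.snd⟫`, so every negative
subspace embeds in `ℝ`, while `(0, ψ)` spans a negative line. -/

open Module RealInnerProductSpace ContinuousLinearMap

noncomputable def sigNegOp {E : Type*} [NormedAddCommGroup E]
    [InnerProductSpace ℝ E] (Q : E →ₗ[ℝ] E) : ℕ∞ :=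
  sSup {n : ℕ∞ | ∃ V : Submodule ℝ E, V ≠ ⊥ ∧ FiniteDimensional ℝ V ∧
    n = (Module.finrank ℝ V : ℕ∞) ∧ ∀ x ∈ V, x ≠ 0 → ⟪x, Q x⟫ < 0}

noncomputable def sigPosOp {E : Type*} [NormedAddCommGroup E]
    [InnerProductSpace ℝ E] (Q : E →ₗ[ℝ] E) : ℕ∞ :=
  sSup {n : ℕ∞ | ∃ V : Submodule ℝ E, V ≠ ⊥ ∧ FiniteDimensional ℝ V ∧
    n = (Module.finrank ℝ V : ℕ∞) ∧ ∀ x ∈ V, x ≠ 0 → 0 < ⟪x, Q x⟫}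

def subspaceFinranks (K : Type*) {E : Type*} [Field K] [AddCommGroup E] [Module K E]
    (p : E → Prop) : Set ℕ∞ :=
  {n | ∃ V : Submodule K E, V ≠ ⊥ ∧ FiniteDimensional K V ∧
    n = (finrank K V : ℕ∞) ∧ ∀ x ∈ V, p x}

section Finranks

variable {K E F : Type*} [Field K] [AddCommGroup E] [Module K E] [AddCommGroup F] [Module K F]

theorem subspaceFinranks_subset_of_injective {p : E → Prop} {q : F → Prop} (S : E →ₗ[K] F)
    (hS : Function.Injective S) (hpq : ∀ x, p x → q (S x)) :
    subspaceFinranks K p ⊆ subspaceFinranks K q := by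
  rintro n ⟨V, hV, _, rfl, hp⟩
  let e := Submodule.equivMapOfInjective S hS V
  refine ⟨V.map S, ?_, e.finiteDimensional, by rw [e.finrank_eq], ?_⟩
  · rwa [← Submodule.map_bot S, (Submodule.map_injective_of_injective hS).ne_iff]
  · rintro _ ⟨x, hx, rfl⟩
    exact hpq x (hp x hx)

theorem subspaceFinranks_congr {p : E → Prop} {q : F → Prop} (S : E ≃ₗ[K] F)
    (hpq : ∀ x, p x ↔ q (S x)) : subspaceFinranks K p = subspaceFinranks K q :=
  (subspaceFinranks_subset_of_injective S.toLinearMap S.injective fun x => (hpq x).1).antisymm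
    (subspaceFinranks_subset_of_injective S.symm.toLinearMap S.symm.injective fun y hy =>
      (hpq _).2 (by simpa using hy))

end Finranks

theorem adjoint_injective_of_surjective {𝕜 E F : Type*} [RCLike 𝕜] [NormedAddCommGroup E]
    [InnerProductSpace 𝕜 E] [CompleteSpace E] [NormedAddCommGroup F] [InnerProductSpace 𝕜 F]
    [CompleteSpace F] {S : E →L[𝕜] F} (hS : Function.Surjective S) :
    Function.Injective (adjoint S) := by
  have hker : (adjoint S).ker = ⊥ := by
    rw [← orthogonal_range, LinearMap.range_eq_top.2 hS, Submodule.top_orthogonal_eq_bot]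
  exact LinearMap.ker_eq_bot.1 hker

section Sylvester

variable {E F : Type*} [NormedAddCommGroup E] [InnerProductSpace ℝ E] [CompleteSpace E]
  [NormedAddCommGroup F] [InnerProductSpace ℝ F] [CompleteSpace F]

theorem eq_adjoint_comp_comp_of_inner {A : E →ₗ[ℝ] E} {S : E →L[ℝ] F} {T : F →ₗ[ℝ] F}
    (h : ∀ w z, ⟪w, A z⟫ = ⟪S w, T (S z)⟫) : A = adjoint S ∘ₗ T ∘ₗ S.toLinearMap :=
  LinearMap.ext fun z => ext_inner_left ℝ fun w => by
    rw [h]; exact (adjoint_inner_right S w _).symm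

variable {S : E →L[ℝ] F}

theorem sigNegOp_adjoint_comp_comp (hS : Function.Bijective S) (T : F →ₗ[ℝ] F) :
    sigNegOp (adjoint S ∘ₗ T ∘ₗ S.toLinearMap) = sigNegOp T :=
  congrArg sSup <| subspaceFinranks_congr (LinearEquiv.ofBijective S.toLinearMap hS) fun x => by
    simp [adjoint_inner_right, map_eq_zero_iff S hS.1]

theorem sigPosOp_adjoint_comp_comp (hS : Function.Bijective S) (T : F →ₗ[ℝ] F) :
    sigPosOp (adjoint S ∘ₗ T ∘ₗ S.toLinearMap) = sigPosOp T :=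
  congrArg sSup <| subspaceFinranks_congr (LinearEquiv.ofBijective S.toLinearMap hS) fun x => by
    simp [adjoint_inner_right, map_eq_zero_iff S hS.1]

theorem sigZero_adjoint_comp_comp (hS : Function.Bijective S) (T : F →ₗ[ℝ] F) :
    sigZero (adjoint S ∘ₗ T ∘ₗ S.toLinearMap) = sigZero T :=
  congrArg sSup <| subspaceFinranks_congr (LinearEquiv.ofBijective S.toLinearMap hS) fun x => by
    simp [map_eq_zero_iff _ (adjoint_injective_of_surjective hS.2)]

end Sylvester

section MorseIndex

variable {E : Type*} [NormedAddCommGroup E] [InnerProductSpace ℝ E] {Q : E →ₗ[ℝ] E}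

theorem one_le_sigNegOp {z : E} (hz : ⟪z, Q z⟫ < 0) : 1 ≤ sigNegOp Q := by
  have hz0 : z ≠ 0 := by rintro rfl; simp at hz
  refine le_sSup ⟨ℝ ∙ z, by simpa using hz0, inferInstance, by simp [finrank_span_singleton hz0],
    fun x hx hx0 => ?_⟩
  obtain ⟨c, rfl⟩ := Submodule.mem_span_singleton.1 hx
  have hc : c ≠ 0 := by rintro rfl; simp at hx0
  calc ⟪c • z, Q (c • z)⟫ = c ^ 2 * ⟪z, Q z⟫ := by
        rw [map_smul, real_inner_smul_left, real_inner_smul_right]; ring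
    _ < 0 := mul_neg_of_pos_of_neg (by positivity) hz

theorem sigNegOp_le_finrank {W : Type*} [AddCommGroup W] [Module ℝ W] [FiniteDimensional ℝ W]
    (f : E →ₗ[ℝ] W) (hf : ∀ x, f x = 0 → 0 ≤ ⟪x, Q x⟫) : sigNegOp Q ≤ finrank ℝ W := by
  refine sSup_le ?_
  rintro _ ⟨V, -, -, rfl, hneg⟩
  have hinj : Function.Injective (f ∘ₗ V.subtype) := by
    rw [← LinearMap.ker_eq_bot, Submodule.eq_bot_iff]
    intro x hx
    by_contra hx0
    exact (hneg x x.2 (by simpa using hx0)).not_ge (hf x hx)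
  exact_mod_cast LinearMap.finrank_le_finrank_of_injective hinj

end MorseIndex

section BlockOperators

variable {H : Type*} [NormedAddCommGroup H] [InnerProductSpace ℝ H] {m m' : H →L[ℝ] H}

theorem blockTriangular_bijective (hinv : m.comp m' = .id ℝ H) (hinv' : m'.comp m = .id ℝ H)
    {S : WithLp 2 (H × H) →L[ℝ] WithLp 2 (H × H)}
    (hS : ∀ z, S z = WithLp.toLp 2 (m z.fst - z.snd, z.snd)) : Function.Bijective S := by
  refine Function.bijective_iff_has_inverse.2
    ⟨fun y => WithLp.toLp 2 (m' (y.fst + y.snd), y.snd), fun z => ?_, fun y => ?_⟩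
  · have hm'm : m' (m z.fst) = z.fst := congr($hinv' z.fst)
    simp [hS, hm'm]
    rfl
  · have hmm' : ∀ x, m (m' x) = x := fun x => congr($hinv x)
    simp [hS, hmm']
    rfl

theorem blockHessian_eq_adjoint_comp_comp [CompleteSpace H] (hm : IsSelfAdjoint m)
    (hinv : m.comp m' = .id ℝ H) (hinv' : m'.comp m = .id ℝ H) (At : H →ₗ[ℝ] H)
    {A T : WithLp 2 (H × H) →ₗ[ℝ] WithLp 2 (H × H)} {S : WithLp 2 (H × H) →L[ℝ] WithLp 2 (H × H)}
    (hA : ∀ z, A z = WithLp.toLp 2 (m z.fst - z.snd, At z.snd - z.fst))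
    (hT : ∀ z, T z = WithLp.toLp 2 (m' z.fst, At z.snd - m' z.snd))
    (hS : ∀ z, S z = WithLp.toLp 2 (m z.fst - z.snd, z.snd)) :
    A = adjoint S ∘ₗ T ∘ₗ S.toLinearMap := by
  refine eq_adjoint_comp_comp_of_inner fun w z => ?_
  have hm'S : m' (m z.fst - z.snd) = z.fst - m' z.snd := by
    rw [map_sub, ← comp_apply, hinv', id_apply]
  have hmm' : m (m' z.snd) = z.snd := congr($hinv z.snd)
  have hmsymm : ∀ x y : H, ⟪m x, y⟫ = ⟪x, m y⟫ := hm.isSymmetric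
  simp only [WithLp.prod_inner_apply, WithLp.ofLp_fst, WithLp.ofLp_snd, WithLp.toLp_fst,
    WithLp.toLp_snd, hA, hT, hS, hm'S, inner_sub_left, inner_sub_right, hmsymm, hmm']
  ring

theorem sigNegOp_blockDiagonal_eq_one (hm'pos : ∀ x : H, x ≠ 0 → 0 < ⟪x, m' x⟫) (At : H →ₗ[ℝ] H)
    {T : WithLp 2 (H × H) →ₗ[ℝ] WithLp 2 (H × H)}
    (hT : ∀ z, T z = WithLp.toLp 2 (m' z.fst, At z.snd - m' z.snd)) {ψ : H} {lam : ℝ} (hψ : ψ ≠ 0)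
    (hlam : lam < 0) (heig : At ψ - m' ψ = lam • ψ)
    (hpos : ∀ x : H, ⟪ψ, x⟫ = 0 → 0 ≤ ⟪x, At x - m' x⟫) : sigNegOp T = 1 := by
  have hform : ∀ z, ⟪z, T z⟫ = ⟪z.fst, m' z.fst⟫ + ⟪z.snd, At z.snd - m' z.snd⟫ := by
    intro z
    simp only [WithLp.prod_inner_apply, WithLp.ofLp_fst, WithLp.ofLp_snd, hT]
  have hm'nonneg : ∀ x, 0 ≤ ⟪x, m' x⟫ := fun x => by
    rcases eq_or_ne x 0 with rfl | hx
    · simp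
    · exact (hm'pos x hx).le
  refine le_antisymm ?_ (one_le_sigNegOp (z := WithLp.toLp 2 (0, ψ)) ?_)
  · refine (sigNegOp_le_finrank (innerₗ H ψ ∘ₗ WithLp.sndₗ 2 ℝ H H) fun z hz => ?_).trans_eq
      (by simp)
    rw [hform]
    exact add_nonneg (hm'nonneg _) (hpos _ hz)
  · rw [hform]
    simpa [heig, real_inner_smul_right] using
      mul_neg_of_neg_of_pos hlam (pow_pos (norm_pos_iff.2 hψ) 2)

end BlockOperators

theorem keller_segel_hessian_factorization_general
    {H : Type*} [NormedAddCommGroup H] [InnerProductSpace ℝ H] [CompleteSpace H]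
    (m m' : H →L[ℝ] H)
    (hm : IsSelfAdjoint m)
    (hm'pos : ∀ x : H, x ≠ 0 → 0 < ⟪x, m' x⟫)
    (hinv : m.comp m' = ContinuousLinearMap.id ℝ H)
    (hinv' : m'.comp m = ContinuousLinearMap.id ℝ H)
    (At : H →ₗ[ℝ] H)
    (e : WithLp 2 (H × H) ≃ₗ[ℝ] H × H)
    (he : e = WithLp.linearEquiv 2 ℝ (H × H))
    (A T : WithLp 2 (H × H) →ₗ[ℝ] WithLp 2 (H × H))
    (S : WithLp 2 (H × H) →L[ℝ] WithLp 2 (H × H))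
    (hA : ∀ z, e (A z) = (m ((e z).1) - (e z).2, At ((e z).2) - (e z).1))
    (hT : ∀ z, e (T z) = (m' ((e z).1), At ((e z).2) - m' ((e z).2)))
    (hS : ∀ z, e (S z) = (m ((e z).1) - (e z).2, (e z).2)) :
    A = (ContinuousLinearMap.adjoint S).toLinearMap ∘ₗ T ∘ₗ S.toLinearMap ∧
    (sigNegOp A = sigNegOp T ∧ sigZero A = sigZero T ∧ sigPosOp A = sigPosOp T) ∧
    ((∃ (ψ : H) (lam : ℝ), ψ ≠ 0 ∧ lam < 0 ∧ At ψ - m' ψ = lam • ψ ∧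
        ∀ x : H, ⟪ψ, x⟫ = 0 → 0 ≤ ⟪x, At x - m' x⟫) →
      sigNegOp A = 1) := by
  subst he
  replace hA z := WithLp.ofLp_injective 2 (hA z)
  replace hT z := WithLp.ofLp_injective 2 (hT z)
  replace hS z := WithLp.ofLp_injective 2 (hS z)
  have hSbij : Function.Bijective S := blockTriangular_bijective hinv hinv' hS
  have hfact := blockHessian_eq_adjoint_comp_comp hm hinv hinv' At hA hT hS
  refine ⟨hfact, ?_, fun ⟨ψ, lam, hψ, hlam, heig, hpos⟩ => ?_⟩
  · rw [hfact]
    exact ⟨sigNegOp_adjoint_comp_comp hSbij T, sigZero_adjoint_comp_comp hSbij T,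
      sigPosOp_adjoint_comp_comp hSbij T⟩
  · rw [hfact, sigNegOp_adjoint_comp_comp hSbij T]
    exact sigNegOp_blockDiagonal_eq_one hm'pos At hT hψ hlam heig hpos

/-- The factorization `A = S* T S` for the constrained Hessian of the coupled
conservative–reaction diffusion system: `H` models the scalar component space
(`L²[0,1]`, resp. `H²_per[0,1]`), `m` is the (bounded, self-adjoint, positive,
invertible) operator of multiplication by `a(u*)/b(u*)`, `m'` its inverse
(multiplication by `b(u*)/a(u*)`), and `Ã = -(1/δ)(d²/dx² + g'(v*))` is
symmetric.  With the block operators `A = [[m, -1],[-1, Ã]]`,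
`S = [[m, 0],[-1, 1]]` and `T = diag(m', Ã - m')` one has `A = S* T S`, hence
`σ_α(A) = σ_α(T)` for each `α ∈ {-,0,+}`; in particular if `Ã - m'` has
exactly one simple negative eigenvalue then `σ₋(A) = 1`. -/
theorem keller_segel_hessian_factorization
    {H : Type*} [NormedAddCommGroup H] [InnerProductSpace ℝ H] [CompleteSpace H]
    (m m' : H →L[ℝ] H)
    (hm : IsSelfAdjoint m) (hm' : IsSelfAdjoint m')
    (hmpos : ∀ x : H, x ≠ 0 → 0 < ⟪x, m x⟫)
    (hm'pos : ∀ x : H, x ≠ 0 → 0 < ⟪x, m' x⟫)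
    (hinv : m.comp m' = ContinuousLinearMap.id ℝ H)
    (hinv' : m'.comp m = ContinuousLinearMap.id ℝ H)
    (At : H →ₗ[ℝ] H) (hAt : LinearMap.IsSymmetric At)
    (e : WithLp 2 (H × H) ≃ₗ[ℝ] H × H)
    (he : e = WithLp.linearEquiv 2 ℝ (H × H))
    (A T : WithLp 2 (H × H) →ₗ[ℝ] WithLp 2 (H × H))
    (S : WithLp 2 (H × H) →L[ℝ] WithLp 2 (H × H))
    (hA : ∀ z, e (A z) = (m ((e z).1) - (e z).2, At ((e z).2) - (e z).1))
    (hT : ∀ z, e (T z) = (m' ((e z).1), At ((e z).2) - m' ((e z).2)))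
    (hS : ∀ z, e (S z) = (m ((e z).1) - (e z).2, (e z).2)) :
    A = (ContinuousLinearMap.adjoint S).toLinearMap ∘ₗ T ∘ₗ S.toLinearMap ∧
    (sigNegOp A = sigNegOp T ∧ sigZero A = sigZero T ∧ sigPosOp A = sigPosOp T) ∧
    ((∃ (ψ : H) (lam : ℝ), ψ ≠ 0 ∧ lam < 0 ∧ At ψ - m' ψ = lam • ψ ∧
        ∀ x : H, ⟪ψ, x⟫ = 0 → 0 ≤ ⟪x, At x - m' x⟫) →
      sigNegOp A = 1) :=
  keller_segel_hessian_factorization_general m m' hm hm'pos hinv hinv' At e he A T S hA hT hS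
end
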